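/- With the setup H = H_A ⊗ H_Ā, projection P_code, and the algebras M_A, M_Ā of logical operators reconstructible on A and Ā respectively: the code exhibits complementary recovery (i.e. there exists a von Neumann algebra M on H_code with M ⊆ M_A and M' ⊆ M_Ā) if and only if M_A' = M_Ā. Moreover, in this case M = M_A is the unique such algebra. -/

import Mathlib

open Matrix Kronecker

variable {ιA ιB : Type*} [Fintype ιA] [Fintype ιB] [DecidableEq ιA] [DecidableEq ιB]

/-- The algebra `M_A` of logical operators reconstructible on `A`. -/
def MA (P : Matrix (ιA × ιB) (ιA × ιB) ℂ) : Set (Matrix (ιA × ιB) (ιA × ιB) ℂ) :=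
  {B | ∃ OA : Matrix ιA ιA ℂ,
    Commute (OA ⊗ₖ (1 : Matrix ιB ιB ℂ)) P ∧ B = P * (OA ⊗ₖ (1 : Matrix ιB ιB ℂ)) * P}

/-- The algebra `M_Ā` of logical operators reconstructible on `Ā`. -/
def MB (P : Matrix (ιA × ιB) (ιA × ιB) ℂ) : Set (Matrix (ιA × ιB) (ιA × ιB) ℂ) :=
  {B | ∃ OB : Matrix ιB ιB ℂ,
    Commute ((1 : Matrix ιA ιA ℂ) ⊗ₖ OB) P ∧ B = P * ((1 : Matrix ιA ιA ℂ) ⊗ₖ OB) * P}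

/-- The commutant of `M` within `L(H_code) = {B : B = P B P}`. -/
def cornerCommutant {n : Type*} [Fintype n]
    (P : Matrix n n ℂ) (M : Set (Matrix n n ℂ)) : Set (Matrix n n ℂ) :=
  {C | C = P * C * P ∧ ∀ B ∈ M, B * C = C * B}

/-- `S` is a von Neumann algebra on the code subspace `H_code = P H`. -/
def IsCodeVNA {n : Type*} [Fintype n]
    (P : Matrix n n ℂ) (S : Set (Matrix n n ℂ)) : Prop :=
  (∀ B ∈ S, B = P * B * P) ∧ P ∈ S ∧
  (∀ a ∈ S, ∀ b ∈ S, a + b ∈ S) ∧ (∀ a ∈ S, ∀ b ∈ S, a * b ∈ S) ∧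
  (∀ (c : ℂ), ∀ a ∈ S, c • a ∈ S) ∧ (∀ a ∈ S, star a ∈ S)

/-!
`M_A` and `M_Ā` are the compressions `P X P` of the ⋆-algebras of operators `O ⊗ 1`, resp.
`1 ⊗ O`, that commute with `P`; since these two algebras commute, `M_Ā ⊆ M_A'` and
`M_A ⊆ M_Ā'`. If `M ⊆ M_A` and `M' ⊆ M_Ā`, then `M_A ⊆ M_Ā' ⊆ M'' = M` by the double
commutant theorem on the code subspace, so `M = M_A` and `M_A' = M' ⊆ M_Ā ⊆ M_A'`.

The double commutant theorem on `P H` follows from the one on `H` applied to the unital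
⋆-algebra `M + ℂ (1 - P)`. On a finite-dimensional Hilbert space a ⋆-closed algebra acts
semisimply (orthogonal complements of invariant subspaces are invariant), so there it is the
Jacobson density theorem.
-/

namespace IsIdempotentElem

variable {R : Type*} [Semigroup R] {p b x : R}

theorem eq_corner_iff (hp : IsIdempotentElem p) : b = p * b * p ↔ p * b = b ∧ b * p = b := by
  refine ⟨fun h => ⟨?_, ?_⟩, fun ⟨hl, hr⟩ => by rw [hl, hr]⟩
  · rw [h, ← mul_assoc, ← mul_assoc, hp.eq]
  · rw [h, mul_assoc _ p p, hp.eq]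

theorem corner_corner (hp : IsIdempotentElem p) (x : R) : p * (p * x * p) * p = p * x * p :=
  (hp.eq_corner_iff.2 ⟨by rw [← mul_assoc, ← mul_assoc, hp.eq],
    by rw [mul_assoc _ p p, hp.eq]⟩).symm

theorem corner_eq_mul_of_commute (hp : IsIdempotentElem p) (hx : Commute x p) :
    p * x * p = p * x := by
  rw [mul_assoc, hx.eq, ← mul_assoc, hp.eq]

theorem corner_mul_corner_of_commute (hp : IsIdempotentElem p) (hx : Commute x p) (y : R) :
    p * x * p * (p * y * p) = p * (x * y) * p := by
  rw [hp.corner_eq_mul_of_commute hx, ← hx.eq, ← mul_assoc, ← mul_assoc, mul_assoc x p p,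
    hp.eq, hx.eq, mul_assoc p x y]

end IsIdempotentElem

theorem MulEquivClass.image_centralizer {F M N : Type*} [Mul M] [Mul N] [EquivLike F M N]
    [MulEquivClass F M N] (e : F) (s : Set M) : e '' s.centralizer = (e '' s).centralizer := by
  ext y
  obtain ⟨x, rfl⟩ := EquivLike.surjective e y
  simp only [(EquivLike.injective e).mem_set_image, Set.mem_centralizer_iff,
    Set.forall_mem_image, ← map_mul, (EquivLike.injective e).eq_iff]

namespace StarSubalgebra

variable {𝕜 E : Type*} [RCLike 𝕜] [NormedAddCommGroup E] [InnerProductSpace 𝕜 E]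
  [FiniteDimensional 𝕜 E] {S : StarSubalgebra 𝕜 (Module.End 𝕜 E)}

instance : IsScalarTower 𝕜 S E := ⟨fun _ _ _ => rfl⟩

noncomputable def orthogonalSubmodule (N : Submodule S E) : Submodule S E where
  toAddSubmonoid := (N.restrictScalars 𝕜)ᗮ.toAddSubmonoid
  smul_mem' a u hu w hw := by
    change inner 𝕜 w ((a : Module.End 𝕜 E) u) = 0
    rw [← LinearMap.adjoint_inner_left, ← LinearMap.star_eq_adjoint]
    exact hu _ (N.smul_mem (star a) hw)

theorem isCompl_orthogonalSubmodule (N : Submodule S E) : IsCompl N (orthogonalSubmodule N) := by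
  have h := (N.restrictScalars 𝕜).isCompl_orthogonal
  refine .of_eq ?_ ?_
  · exact (Submodule.restrictScalars_eq_bot_iff 𝕜 _ _).1 <| by
      rw [Submodule.restrictScalars_inf]; exact h.inf_eq_bot
  · exact (Submodule.restrictScalars_eq_top_iff 𝕜 _ _).1 <| by
      rw [Submodule.restrictScalars_sup]; exact h.sup_eq_top

instance isSemisimpleModule : IsSemisimpleModule S E :=
  { exists_isCompl := fun N => ⟨_, isCompl_orthogonalSubmodule N⟩ }

theorem centralizer_centralizer_eq (S : StarSubalgebra 𝕜 (Module.End 𝕜 E)) :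
    (S : Set (Module.End 𝕜 E)).centralizer.centralizer = S := by
  classical
  refine subset_antisymm (fun X hX => ?_) Set.subset_centralizer_centralizer
  let f : Module.End (Module.End S E) E :=
    { toFun := X
      map_add' := X.map_add
      map_smul' := fun g v => by
        have hg : g.restrictScalars 𝕜 ∈ (S : Set (Module.End 𝕜 E)).centralizer :=
          fun a ha => LinearMap.ext fun u => (g.map_smul ⟨a, ha⟩ u).symm
        exact (LinearMap.congr_fun (hX _ hg) v).symm }
  let b := Module.finBasis 𝕜 E
  obtain ⟨r, hr⟩ := jacobson_density f (Finset.univ.image b)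
  have hXr : X = r := b.ext fun i => hr _ (Finset.mem_image_of_mem b (Finset.mem_univ i))
  exact hXr ▸ r.2

end StarSubalgebra

theorem Matrix.centralizer_centralizer_starSubalgebra {𝕜 n : Type*} [RCLike 𝕜] [Fintype n]
    [DecidableEq n] (S : StarSubalgebra 𝕜 (Matrix n n 𝕜)) :
    (S : Set (Matrix n n 𝕜)).centralizer.centralizer = S := by
  let e := (LinearMap.toMatrixOrthonormal (EuclideanSpace.basisFun n 𝕜)).symm
  apply Set.image_injective.2 (EquivLike.injective e)
  rw [MulEquivClass.image_centralizer, MulEquivClass.image_centralizer]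
  exact (S.map e.toStarAlgHom).centralizer_centralizer_eq

section Code

variable {n : Type*} [Fintype n] {P : Matrix n n ℂ}

theorem cornerCommutant_subset {M₁ M₂ : Set (Matrix n n ℂ)} (h : M₁ ⊆ M₂) :
    cornerCommutant P M₂ ⊆ cornerCommutant P M₁ :=
  fun _ hC => ⟨hC.1, fun B hB => hC.2 B (h hB)⟩

namespace IsCodeVNA

variable {M : Set (Matrix n n ℂ)}

theorem eq_corner (hM : IsCodeVNA P M) {B : Matrix n n ℂ} (hB : B ∈ M) : B = P * B * P :=
  hM.1 B hB

theorem proj_mem (hM : IsCodeVNA P M) : P ∈ M := hM.2.1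

theorem add_mem (hM : IsCodeVNA P M) {a b : Matrix n n ℂ} (ha : a ∈ M) (hb : b ∈ M) :
    a + b ∈ M :=
  hM.2.2.1 a ha b hb

theorem mul_mem (hM : IsCodeVNA P M) {a b : Matrix n n ℂ} (ha : a ∈ M) (hb : b ∈ M) :
    a * b ∈ M :=
  hM.2.2.2.1 a ha b hb

theorem smul_mem (hM : IsCodeVNA P M) (c : ℂ) {a : Matrix n n ℂ} (ha : a ∈ M) :
    c • a ∈ M :=
  hM.2.2.2.2.1 c a ha

theorem star_mem (hM : IsCodeVNA P M) {a : Matrix n n ℂ} (ha : a ∈ M) : star a ∈ M :=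
  hM.2.2.2.2.2 a ha

end IsCodeVNA

variable [DecidableEq n]

def IsCodeVNA.unitization {M : Set (Matrix n n ℂ)} (hP : IsStarProjection P)
    (hM : IsCodeVNA P M) : StarSubalgebra ℂ (Matrix n n ℂ) where
  carrier := {X | ∃ B ∈ M, ∃ c : ℂ, B + c • (1 - P) = X}
  mul_mem' := by
    rintro _ _ ⟨B, hB, c, rfl⟩ ⟨B', hB', c', rfl⟩
    have hBQ : B * (1 - P) = 0 := by
      rw [mul_sub, mul_one, (hP.isIdempotentElem.eq_corner_iff.1 (hM.eq_corner hB)).2, sub_self]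
    have hQB' : (1 - P) * B' = 0 := by
      rw [sub_mul, one_mul, (hP.isIdempotentElem.eq_corner_iff.1 (hM.eq_corner hB')).1, sub_self]
    have hQ : (1 - P) * (1 - P) = 1 - P := hP.isIdempotentElem.one_sub.eq
    refine ⟨B * B', hM.mul_mem hB hB', c * c', ?_⟩
    simp only [add_mul, mul_add, smul_mul_assoc, mul_smul_comm, hBQ, hQB', hQ, smul_zero,
      add_zero, zero_add, smul_smul, mul_comm c' c]
  add_mem' := by
    rintro _ _ ⟨B, hB, c, rfl⟩ ⟨B', hB', c', rfl⟩
    exact ⟨B + B', hM.add_mem hB hB', c + c', by rw [add_smul]; abel⟩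
  algebraMap_mem' c :=
    ⟨c • P, hM.smul_mem c hM.proj_mem, c, by
      rw [Algebra.algebraMap_eq_smul_one, ← smul_add, add_sub_cancel]⟩
  star_mem' := by
    rintro _ ⟨B, hB, c, rfl⟩
    exact ⟨star B, hM.star_mem hB, star c, by
      rw [star_add, star_smul, star_sub, star_one, hP.isSelfAdjoint.star_eq]⟩

theorem IsCodeVNA.cornerCommutant_cornerCommutant_subset {M : Set (Matrix n n ℂ)}
    (hP : IsStarProjection P) (hM : IsCodeVNA P M) :
    cornerCommutant P (cornerCommutant P M) ⊆ M := by
  rintro A ⟨hA, hAcomm⟩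
  have hAS : A ∈ hM.unitization hP := by
    rw [← SetLike.mem_coe, ← Matrix.centralizer_centralizer_starSubalgebra]
    intro Y hY
    have hYM : ∀ B ∈ M, B * Y = Y * B := fun B hB => hY B ⟨B, hB, 0, by simp⟩
    have hYP : Commute Y P := (hYM P hM.proj_mem).symm
    have hPY : P * Y * P = P * Y := hP.isIdempotentElem.corner_eq_mul_of_commute hYP
    have hC : P * Y * P ∈ cornerCommutant P M := by
      refine ⟨(hP.isIdempotentElem.corner_corner Y).symm, fun B hB => ?_⟩
      have hBc := hP.isIdempotentElem.eq_corner_iff.1 (hM.eq_corner hB)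
      rw [hPY]
      have hBP : Commute B P := hBc.2.trans hBc.1.symm
      exact hBP.mul_right (hYM B hB)
    have hAc := hP.isIdempotentElem.eq_corner_iff.1 hA
    calc Y * A = P * Y * P * A := by rw [hPY, ← hYP.eq, mul_assoc, hAc.1]
      _ = A * (P * Y * P) := hAcomm _ hC
      _ = A * Y := by rw [hPY, ← mul_assoc, hAc.2]
  obtain ⟨B, hB, c, rfl⟩ := hAS
  have hPQP : P * (1 - P) * P = 0 := by
    rw [mul_sub, mul_one, hP.isIdempotentElem.eq, sub_self, zero_mul]
  rw [hA, mul_add, add_mul, mul_smul_comm, smul_mul_assoc, hPQP, smul_zero, add_zero,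
    ← hM.eq_corner hB]
  exact hB

end Code

section Compression

variable {n : Type*} [Fintype n] [DecidableEq n] {P : Matrix n n ℂ}

def compression (P : Matrix n n ℂ) (T : StarSubalgebra ℂ (Matrix n n ℂ)) :
    Set (Matrix n n ℂ) :=
  (fun X => P * X * P) '' ↑(T ⊓ StarSubalgebra.centralizer ℂ {P})

theorem mem_compression_iff (hP : IsSelfAdjoint P) {T : StarSubalgebra ℂ (Matrix n n ℂ)}
    {B : Matrix n n ℂ} :
    B ∈ compression P T ↔ ∃ X ∈ T, Commute X P ∧ P * X * P = B := by
  simp only [compression, Set.mem_image, SetLike.mem_coe, StarSubalgebra.mem_inf,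
    StarSubalgebra.mem_centralizer_iff, Set.mem_singleton_iff, forall_eq, hP.star_eq,
    and_self, and_assoc]
  exact exists_congr fun X => and_congr_right fun _ => and_congr_left fun _ => eq_comm

theorem isCodeVNA_compression (hP : IsStarProjection P) (T : StarSubalgebra ℂ (Matrix n n ℂ)) :
    IsCodeVNA P (compression P T) := by
  have hPi := hP.isIdempotentElem
  simp only [IsCodeVNA, mem_compression_iff hP.isSelfAdjoint]
  refine ⟨?_, ⟨1, one_mem T, Commute.one_left P, by rw [mul_one, hPi.eq]⟩, ?_, ?_, ?_, ?_⟩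
  · rintro _ ⟨X, -, -, rfl⟩
    exact (hPi.corner_corner X).symm
  · rintro _ ⟨X, hX, hXP, rfl⟩ _ ⟨Y, hY, hYP, rfl⟩
    exact ⟨X + Y, add_mem hX hY, hXP.add_left hYP, by rw [mul_add, add_mul]⟩
  · rintro _ ⟨X, hX, hXP, rfl⟩ _ ⟨Y, hY, hYP, rfl⟩
    exact ⟨X * Y, mul_mem hX hY, hXP.mul_left hYP,
      (hPi.corner_mul_corner_of_commute hXP Y).symm⟩
  · rintro c _ ⟨X, hX, hXP, rfl⟩
    exact ⟨c • X, T.smul_mem hX c, hXP.smul_left c, by rw [mul_smul_comm, smul_mul_assoc]⟩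
  · rintro _ ⟨X, hX, hXP, rfl⟩
    refine ⟨star X, star_mem hX, ?_, ?_⟩
    · simpa [hP.isSelfAdjoint.star_eq] using hXP.star_star
    · rw [star_mul, star_mul, hP.isSelfAdjoint.star_eq, mul_assoc]

theorem compression_subset_cornerCommutant (hP : IsStarProjection P)
    {T T' : StarSubalgebra ℂ (Matrix n n ℂ)} (hTT' : ∀ X ∈ T, ∀ Y ∈ T', Commute X Y) :
    compression P T' ⊆ cornerCommutant P (compression P T) := by
  have hPi := hP.isIdempotentElem
  intro _ hB
  obtain ⟨Y, hY, hYP, rfl⟩ := (mem_compression_iff hP.isSelfAdjoint).1 hB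
  refine ⟨(hPi.corner_corner Y).symm, fun _ hB' => ?_⟩
  obtain ⟨X, hX, hXP, rfl⟩ := (mem_compression_iff hP.isSelfAdjoint).1 hB'
  rw [hPi.corner_mul_corner_of_commute hXP, hPi.corner_mul_corner_of_commute hYP,
    (hTT' X hX Y hY).eq]

end Compression

namespace Matrix

variable {R l m : Type*} [CommSemiring R] [Fintype l] [Fintype m] [DecidableEq l] [DecidableEq m]

theorem commute_kronecker_one_one_kronecker (a : Matrix l l R) (b : Matrix m m R) :
    Commute (a ⊗ₖ 1) (1 ⊗ₖ b) := by
  simp only [Commute, SemiconjBy, ← mul_kronecker_mul, mul_one, one_mul]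

variable [StarRing R]

def kroneckerOneStarAlgHom : Matrix l l R →⋆ₐ[R] Matrix (l × m) (l × m) R where
  toFun a := a ⊗ₖ 1
  map_one' := one_kronecker_one
  map_mul' a b := by rw [← mul_kronecker_mul, one_mul]
  map_zero' := zero_kronecker 1
  map_add' a b := add_kronecker a b 1
  commutes' r := by
    simp only [Algebra.algebraMap_eq_smul_one, smul_kronecker, one_kronecker_one]
  map_star' a := by
    simp only [star_eq_conjTranspose, conjTranspose_kronecker, conjTranspose_one]

def oneKroneckerStarAlgHom : Matrix m m R →⋆ₐ[R] Matrix (l × m) (l × m) R where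
  toFun b := 1 ⊗ₖ b
  map_one' := one_kronecker_one
  map_mul' a b := by rw [← mul_kronecker_mul, one_mul]
  map_zero' := kronecker_zero 1
  map_add' a b := kronecker_add 1 a b
  commutes' r := by
    simp only [Algebra.algebraMap_eq_smul_one, kronecker_smul, one_kronecker_one]
  map_star' b := by
    simp only [star_eq_conjTranspose, conjTranspose_kronecker, conjTranspose_one]

theorem commute_of_mem_range_kroneckerOneStarAlgHom {X Y : Matrix (l × m) (l × m) R}
    (hX : X ∈ (kroneckerOneStarAlgHom : Matrix l l R →⋆ₐ[R] _).range)
    (hY : Y ∈ (oneKroneckerStarAlgHom : Matrix m m R →⋆ₐ[R] _).range) : Commute X Y := by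
  obtain ⟨a, rfl⟩ := hX
  obtain ⟨b, rfl⟩ := hY
  exact commute_kronecker_one_one_kronecker a b

end Matrix

section Recovery

variable {P : Matrix (ιA × ιB) (ιA × ιB) ℂ}

theorem MA_eq_compression (hP : IsSelfAdjoint P) :
    MA P = compression P (Matrix.kroneckerOneStarAlgHom).range := by
  ext B
  rw [mem_compression_iff hP]
  constructor
  · rintro ⟨O, hO, rfl⟩
    exact ⟨_, ⟨O, rfl⟩, hO, rfl⟩
  · rintro ⟨_, ⟨O, rfl⟩, hO, rfl⟩
    exact ⟨O, hO, rfl⟩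

theorem MB_eq_compression (hP : IsSelfAdjoint P) :
    MB P = compression P (Matrix.oneKroneckerStarAlgHom).range := by
  ext B
  rw [mem_compression_iff hP]
  constructor
  · rintro ⟨O, hO, rfl⟩
    exact ⟨_, ⟨O, rfl⟩, hO, rfl⟩
  · rintro ⟨_, ⟨O, rfl⟩, hO, rfl⟩
    exact ⟨O, hO, rfl⟩

theorem isCodeVNA_MA (hP : IsStarProjection P) : IsCodeVNA P (MA P) :=
  MA_eq_compression hP.isSelfAdjoint ▸ isCodeVNA_compression hP _

theorem MB_subset_cornerCommutant_MA (hP : IsStarProjection P) :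
    MB P ⊆ cornerCommutant P (MA P) := by
  rw [MA_eq_compression hP.isSelfAdjoint, MB_eq_compression hP.isSelfAdjoint]
  exact compression_subset_cornerCommutant hP fun X hX Y hY =>
    Matrix.commute_of_mem_range_kroneckerOneStarAlgHom hX hY

theorem MA_subset_cornerCommutant_MB (hP : IsStarProjection P) :
    MA P ⊆ cornerCommutant P (MB P) := by
  rw [MA_eq_compression hP.isSelfAdjoint, MB_eq_compression hP.isSelfAdjoint]
  exact compression_subset_cornerCommutant hP fun Y hY X hX =>
    (Matrix.commute_of_mem_range_kroneckerOneStarAlgHom hX hY).symm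

end Recovery

/-- **Criterion 1 of complementary recovery.** The code exhibits
complementary recovery — there exists a von Neumann algebra `M` on `H_code` with
`M ⊆ M_A` and `M' ⊆ M_Ā` — if and only if `M_A' = M_Ā`; moreover `M = M_A` is the unique
such algebra. -/
theorem complementary_recovery_criterion_one (P : Matrix (ιA × ιB) (ιA × ιB) ℂ)
    (hP : P * P = P) (hPsa : IsSelfAdjoint P) :
    ((∃ M : Set (Matrix (ιA × ιB) (ιA × ιB) ℂ),
        IsCodeVNA P M ∧ M ⊆ MA P ∧ cornerCommutant P M ⊆ MB P) ↔
      cornerCommutant P (MA P) = MB P) ∧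
    (∀ M : Set (Matrix (ιA × ιB) (ιA × ιB) ℂ),
      IsCodeVNA P M → M ⊆ MA P → cornerCommutant P M ⊆ MB P → M = MA P) := by
  have hPP : IsStarProjection P := ⟨hP, hPsa⟩
  have unique : ∀ M : Set (Matrix (ιA × ιB) (ιA × ιB) ℂ),
      IsCodeVNA P M → M ⊆ MA P → cornerCommutant P M ⊆ MB P → M = MA P :=
    fun M hM hMA hMB => hMA.antisymm <| (MA_subset_cornerCommutant_MB hPP).trans <|
      (cornerCommutant_subset hMB).trans (hM.cornerCommutant_cornerCommutant_subset hPP)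
  refine ⟨⟨?_, fun h => ⟨MA P, isCodeVNA_MA hPP, subset_rfl, h.subset⟩⟩, unique⟩
  rintro ⟨M, hM, hMA, hMB⟩
  obtain rfl := unique M hM hMA hMB
  exact hMB.antisymm (MB_subset_cornerCommutant_MA hPP)
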